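/- Let n be divisible by r, and let H be obtained from the complete r-partite graph with all parts of size n/r by adding two edges u₁v₁ and u₂v₂ inside the same part sharing exactly one common endpoint (v₁ = u₂). Then the number of copies of K_{r+2}−e in H containing both added edges equals (n/r)^{r−1}. -/

import Mathlib

/-!
A copy of `K_{r+2} − e` through `u₁v₁` and `v₁v₂` contains the non-edge `u₁v₂`, so `u₁v₂` is its
missing edge and the copy is the induced subgraph on its vertex set, which spans every other pair.
In `H` this forces the vertex set to meet the part of the path exactly in `{u₁, v₁, v₂}` and every
other part in at most one vertex; having `r + 2` vertices, it meets each other part exactly once.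
Conversely every choice of one vertex in each of the other `r - 1` parts spans such a copy.
-/

/-- `K_{r+2}` minus one edge. -/
def cliqueMinusEdge (r : ℕ) : SimpleGraph (Fin (r + 2)) :=
  (⊤ : SimpleGraph (Fin (r + 2))).deleteEdges {s(0, 1)}

open SimpleGraph Function

theorem Nat.card_subtype_ne {ι : Type*} [Finite ι] (i0 : ι) :
    Nat.card {i // i ≠ i0} = Nat.card ι - 1 := by
  rw [← Set.ncard_singleton i0, ← Set.ncard_compl]
  exact Nat.card_coe_set_eq _

theorem Equiv.Perm.exists_apply_eq_and_apply_eq {α : Type*} [DecidableEq α] {a b c d : α}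
    (hab : a ≠ b) (hcd : c ≠ d) : ∃ σ : Equiv.Perm α, σ a = c ∧ σ b = d := by
  have hb : Equiv.swap a c b ≠ c := by
    rw [Ne, Equiv.swap_apply_eq_iff, Equiv.swap_apply_right]; exact hab.symm
  refine ⟨Equiv.swap (Equiv.swap a c b) d * Equiv.swap a c, ?_, ?_⟩
  · simp only [Equiv.Perm.mul_apply, Equiv.swap_apply_left]
    exact Equiv.swap_apply_of_ne_of_ne hb.symm hcd
  · simp only [Equiv.Perm.mul_apply, Equiv.swap_apply_left]

theorem cliqueMinusEdge_adj {r : ℕ} {i j : Fin (r + 2)} :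
    (cliqueMinusEdge r).Adj i j ↔ i ≠ j ∧ s(i, j) ≠ s(0, 1) := by
  simp [cliqueMinusEdge]

theorem nonempty_iso_cliqueMinusEdge_iff {V : Type*} {G : SimpleGraph V} {r : ℕ} :
    Nonempty (G ≃g cliqueMinusEdge r) ↔
      Nat.card V = r + 2 ∧ ∃ a b, a ≠ b ∧ ∀ x y, G.Adj x y ↔ x ≠ y ∧ s(x, y) ≠ s(a, b) := by
  constructor
  · rintro ⟨e⟩
    refine ⟨by simpa using Nat.card_congr e.toEquiv, e.symm 0, e.symm 1, by simp, fun x y => ?_⟩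
    rw [← e.map_adj_iff, cliqueMinusEdge_adj, e.injective.ne_iff, ← e.apply_symm_apply 0,
      ← e.apply_symm_apply 1, ← Sym2.map_mk, ← Sym2.map_mk,
      (Sym2.map.injective e.injective).ne_iff]
    simp
  · rintro ⟨hcard, a, b, hab, hG⟩
    classical
    have : Finite V := Nat.finite_of_card_ne_zero (by omega)
    let e₀ := Finite.equivFinOfCardEq hcard
    obtain ⟨σ, hσa, hσb⟩ := Equiv.Perm.exists_apply_eq_and_apply_eq (e₀.injective.ne hab)
      (zero_ne_one : (0 : Fin (r + 2)) ≠ 1)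
    let e := e₀.trans σ
    have hea : e a = 0 := hσa
    have heb : e b = 1 := hσb
    refine ⟨⟨e, fun {x y} => ?_⟩⟩
    rw [cliqueMinusEdge_adj, hG, e.injective.ne_iff, ← hea, ← heb, ← Sym2.map_mk,
      ← Sym2.map_mk, (Sym2.map.injective e.injective).ne_iff]

namespace SimpleGraph

variable {V : Type*}

def IsCliqueExcept (G : SimpleGraph V) (e : Sym2 V) (s : Set V) : Prop :=
  ∀ ⦃x⦄, x ∈ s → ∀ ⦃y⦄, y ∈ s → x ≠ y → (G.Adj x y ↔ s(x, y) ≠ e)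

theorem Subgraph.nonempty_coe_iso_cliqueMinusEdge_iff {G : SimpleGraph V} {H : G.Subgraph}
    {r : ℕ} {a b : V} (ha : a ∈ H.verts) (hb : b ∈ H.verts) (hab : a ≠ b) (hnadj : ¬ G.Adj a b) :
    Nonempty (H.coe ≃g cliqueMinusEdge r) ↔
      H.verts.ncard = r + 2 ∧ H.IsInduced ∧ G.IsCliqueExcept s(a, b) H.verts := by
  rw [nonempty_iso_cliqueMinusEdge_iff, Nat.card_coe_set_eq]
  constructor
  · rintro ⟨hcard, a', b', -, hadj⟩
    have hab' : s(⟨a, ha⟩, ⟨b, hb⟩) = s(a', b') := by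
      by_contra h
      exact hnadj ((hadj ⟨a, ha⟩ ⟨b, hb⟩).2 ⟨by simpa using hab, h⟩).adj_sub
    have hH : ∀ ⦃x⦄, x ∈ H.verts → ∀ ⦃y⦄, y ∈ H.verts → x ≠ y →
        (H.Adj x y ↔ s(x, y) ≠ s(a, b)) := by
      intro x hx y hy hxy
      simpa [← hab', hxy] using hadj ⟨x, hx⟩ ⟨y, hy⟩
    have hind : H.IsInduced := fun x hx y hy hxy =>
      (hH hx hy hxy.ne).2 fun h => hnadj (by rwa [← mem_edgeSet, ← h])
    exact ⟨hcard, hind, fun x hx y hy hxy => ⟨fun h => (hH hx hy hxy).1 (hind hx hy h),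
      fun h => ((hH hx hy hxy).2 h).adj_sub⟩⟩
  · rintro ⟨hcard, hind, hclique⟩
    refine ⟨hcard, ⟨a, ha⟩, ⟨b, hb⟩, by simpa using hab, fun x y => ?_⟩
    rw [Subgraph.coe_adj, hind.adj]
    by_cases hxy : x = y
    · simp [hxy]
    · simp [hclique x.2 y.2 (Subtype.coe_injective.ne hxy), hxy, Subtype.ext_iff]

end SimpleGraph

variable {ι : Type*} {α : ι → Type*}

def completeMultipartiteWithPath (α : ι → Type*) (u₁ v₁ v₂ : Σ i, α i) :
    SimpleGraph (Σ i, α i) :=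
  completeMultipartiteGraph α ⊔ fromEdgeSet {s(u₁, v₁), s(v₁, v₂)}

def pathWithTransversal {i0 : ι} (u₁ v₁ v₂ : Σ i, α i) (f : ∀ i : {i // i ≠ i0}, α i) :
    Set (Σ i, α i) :=
  {u₁, v₁, v₂} ∪ Set.range fun i => ⟨i.1, f i⟩

namespace completeMultipartiteWithPath

variable {u₁ v₁ v₂ x y : Σ i, α i} {i0 : ι}

theorem adj_iff : (completeMultipartiteWithPath α u₁ v₁ v₂).Adj x y ↔
    x.1 ≠ y.1 ∨ (s(x, y) = s(u₁, v₁) ∨ s(x, y) = s(v₁, v₂)) ∧ x ≠ y := by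
  simp only [completeMultipartiteWithPath, sup_adj, comap_adj, top_adj, fromEdgeSet_adj,
    Set.mem_insert_iff, Set.mem_singleton_iff]

theorem mem_of_adj_of_fst_eq (h : (completeMultipartiteWithPath α u₁ v₁ v₂).Adj x y)
    (hxy : x.1 = y.1) : x ∈ ({u₁, v₁, v₂} : Set _) ∧ y ∈ ({u₁, v₁, v₂} : Set _) := by
  rcases adj_iff.1 h with h | ⟨h | h, -⟩
  · exact absurd hxy h
  all_goals rcases Sym2.eq_iff.1 h with ⟨rfl, rfl⟩ | ⟨rfl, rfl⟩ <;> simp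

theorem isCliqueExcept_path (h₁₂ : u₁.1 = v₂.1) (hne₁ : u₁ ≠ v₁) (hne₂ : v₁ ≠ v₂) :
    (completeMultipartiteWithPath α u₁ v₁ v₂).IsCliqueExcept s(u₁, v₂) {u₁, v₁, v₂} := by
  intro x hx y hy hxy
  simp only [Set.mem_insert_iff, Set.mem_singleton_iff] at hx hy
  rcases hx with rfl | rfl | rfl <;> rcases hy with rfl | rfl | rfl <;>
    grind [adj_iff, Sym2.eq_iff]

theorem isCliqueExcept_iff (h₁₂ : u₁.1 = v₂.1) (hne₁ : u₁ ≠ v₁) (hne₂ : v₁ ≠ v₂)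
    {S : Set (Σ i, α i)} :
    (completeMultipartiteWithPath α u₁ v₁ v₂).IsCliqueExcept s(u₁, v₂) S ↔
      ∀ x ∈ S, ∀ y ∈ S, x.1 = y.1 →
        x = y ∨ x ∈ ({u₁, v₁, v₂} : Set _) ∧ y ∈ ({u₁, v₁, v₂} : Set _) := by
  constructor
  · intro hS x hx y hy hxy
    refine or_iff_not_imp_left.2 fun hne => ?_
    by_contra hP
    have hnadj := mt (mem_of_adj_of_fst_eq · hxy) hP
    rw [hS hx hy hne, not_not] at hnadj
    rcases Sym2.eq_iff.1 hnadj with ⟨rfl, rfl⟩ | ⟨rfl, rfl⟩ <;> simp at hP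
  · intro hS x hx y hy hne
    by_cases hxy : x.1 = y.1
    · obtain ⟨hxP, hyP⟩ := (hS x hx y hy hxy).resolve_left hne
      exact isCliqueExcept_path h₁₂ hne₁ hne₂ hxP hyP hne
    · refine iff_of_true (adj_iff.2 (Or.inl hxy)) fun h => hxy ?_
      rcases Sym2.eq_iff.1 h with ⟨rfl, rfl⟩ | ⟨rfl, rfl⟩
      exacts [h₁₂, h₁₂.symm]

theorem isCliqueExcept_pathWithTransversal
    (hP : ∀ x ∈ ({u₁, v₁, v₂} : Set (Σ i, α i)), x.1 = i0) (hne₁ : u₁ ≠ v₁) (hne₂ : v₁ ≠ v₂)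
    (f : ∀ i : {i // i ≠ i0}, α i) :
    (completeMultipartiteWithPath α u₁ v₁ v₂).IsCliqueExcept s(u₁, v₂)
      (pathWithTransversal u₁ v₁ v₂ f) := by
  rw [isCliqueExcept_iff ((hP u₁ (by simp)).trans (hP v₂ (by simp)).symm) hne₁ hne₂]
  rintro x (hx | ⟨i, rfl⟩) y (hy | ⟨j, rfl⟩) hxy
  · exact Or.inr ⟨hx, hy⟩
  · exact (j.2 (hxy.symm.trans (hP x hx))).elim
  · exact (i.2 (hxy.trans (hP y hy))).elim
  · obtain rfl : i = j := Subtype.ext hxy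
    exact Or.inl rfl

theorem pathWithTransversal_injective (hP : ∀ x ∈ ({u₁, v₁, v₂} : Set (Σ i, α i)), x.1 = i0) :
    Injective (pathWithTransversal (i0 := i0) u₁ v₁ v₂) := by
  intro f g hfg
  funext i
  obtain hPi | ⟨j, hj⟩ : ⟨i.1, f i⟩ ∈ pathWithTransversal u₁ v₁ v₂ g := hfg ▸ Or.inr ⟨i, rfl⟩
  · exact (i.2 (hP _ hPi)).elim
  · obtain rfl : j = i := Subtype.ext (congrArg Sigma.fst hj)
    exact (sigma_mk_injective hj).symm

theorem ncard_pathWithTransversal [Finite ι]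
    (hP : ∀ x ∈ ({u₁, v₁, v₂} : Set (Σ i, α i)), x.1 = i0)
    (hne₁ : u₁ ≠ v₁) (hne₂ : v₁ ≠ v₂) (hne₃ : u₁ ≠ v₂) (f : ∀ i : {i // i ≠ i0}, α i) :
    (pathWithTransversal u₁ v₁ v₂ f).ncard = Nat.card ι + 2 := by
  have hdisj : Disjoint ({u₁, v₁, v₂} : Set (Σ i, α i)) (Set.range fun i => ⟨i.1, f i⟩) := by
    rw [Set.disjoint_right]
    rintro _ ⟨i, rfl⟩ hi
    exact i.2 (hP _ hi)
  have hrange : (Set.range fun i => (⟨i.1, f i⟩ : Σ i, α i)).ncard = Nat.card ι - 1 := by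
    rw [Set.ncard_range_of_injective fun i j h => Subtype.ext (congrArg Sigma.fst h),
      Nat.card_subtype_ne]
  have hι : 0 < Nat.card ι := Nat.card_pos_iff.2 ⟨⟨i0⟩, inferInstance⟩
  rw [pathWithTransversal, Set.ncard_union_eq hdisj, hrange,
    Set.ncard_eq_three.2 ⟨u₁, v₁, v₂, hne₁, hne₃, hne₂, rfl⟩]
  omega

theorem exists_eq_pathWithTransversal [Finite ι]
    (hP : ∀ x ∈ ({u₁, v₁, v₂} : Set (Σ i, α i)), x.1 = i0)
    (hne₁ : u₁ ≠ v₁) (hne₂ : v₁ ≠ v₂) (hne₃ : u₁ ≠ v₂) {S : Set (Σ i, α i)}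
    (hPS : {u₁, v₁, v₂} ⊆ S)
    (hS : (completeMultipartiteWithPath α u₁ v₁ v₂).IsCliqueExcept s(u₁, v₂) S)
    (hcard : S.ncard = Nat.card ι + 2) :
    ∃ f : ∀ i : {i // i ≠ i0}, α i, S = pathWithTransversal u₁ v₁ v₂ f := by
  set P : Set (Σ i, α i) := {u₁, v₁, v₂}
  have hu₁P : u₁ ∈ P := by simp [P]
  rw [isCliqueExcept_iff ((hP u₁ hu₁P).trans (hP v₂ (by simp [P])).symm) hne₁ hne₂] at hS
  have hout : ∀ x ∈ S \ P, x.1 ≠ i0 := fun x hx hx0 =>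
    hx.2 <| (hS x hx.1 u₁ (hPS hu₁P) (hx0.trans (hP u₁ hu₁P).symm)).elim (· ▸ hu₁P) And.left
  have hinj : Set.InjOn Sigma.fst (S \ P) := fun x hx y hy hxy =>
    (hS x hx.1 y hy.1 hxy).resolve_right fun h => hx.2 h.1
  -- `S \ P` has `Nat.card ι - 1` vertices, in distinct parts other than `i0`: it meets them all
  have himage : Sigma.fst '' (S \ P) = {i0}ᶜ := by
    refine Set.eq_of_subset_of_ncard_le (Set.image_subset_iff.2 hout) ?_
    rw [hinj.ncard_image, Set.ncard_sdiff hPS, hcard, Set.ncard_compl, Set.ncard_singleton,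
      Set.ncard_eq_three.2 ⟨u₁, v₁, v₂, hne₁, hne₃, hne₂, rfl⟩]
    omega
  have hex : ∀ i : {i // i ≠ i0}, ∃ a : α i, ⟨i.1, a⟩ ∈ S := by
    intro i
    have hi : i.1 ∈ Sigma.fst '' (S \ P) := by rw [himage]; exact i.2
    obtain ⟨⟨j, a⟩, hx, rfl⟩ := hi
    exact ⟨a, hx.1⟩
  choose f hf using hex
  refine ⟨f, subset_antisymm (fun x hx => ?_) (Set.union_subset hPS (Set.range_subset_iff.2 hf))⟩
  by_cases hxP : x ∈ P
  · exact Or.inl hxP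
  · exact Or.inr ⟨⟨x.1, hout x ⟨hx, hxP⟩⟩,
      (hS _ (hf _) x hx rfl).resolve_right fun h => hxP h.2⟩

theorem copies_eq_range_induce_pathWithTransversal [Finite ι]
    (hP : ∀ x ∈ ({u₁, v₁, v₂} : Set (Σ i, α i)), x.1 = i0)
    (hne₁ : u₁ ≠ v₁) (hne₂ : v₁ ≠ v₂) (hne₃ : u₁ ≠ v₂) :
    {H : (completeMultipartiteWithPath α u₁ v₁ v₂).Subgraph |
        Nonempty (H.coe ≃g cliqueMinusEdge (Nat.card ι)) ∧
          s(u₁, v₁) ∈ H.edgeSet ∧ s(v₁, v₂) ∈ H.edgeSet} =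
      Set.range fun f : ∀ i : {i // i ≠ i0}, α i =>
        (⊤ : Subgraph _).induce (pathWithTransversal u₁ v₁ v₂ f) := by
  have h₁₂ : u₁.1 = v₂.1 := (hP u₁ (by simp)).trans (hP v₂ (by simp)).symm
  have hnadj : ¬ (completeMultipartiteWithPath α u₁ v₁ v₂).Adj u₁ v₂ := fun h =>
    (isCliqueExcept_path h₁₂ hne₁ hne₂ (by simp) (by simp) hne₃).1 h rfl
  ext H
  simp only [Set.mem_range, Subgraph.mem_edgeSet]
  constructor
  · rintro ⟨hiso, h₁, h₂⟩
    obtain ⟨hcard, hind, hS⟩ := (Subgraph.nonempty_coe_iso_cliqueMinusEdge_iff h₁.fst_mem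
      h₂.snd_mem hne₃ hnadj).1 hiso
    have hPS : {u₁, v₁, v₂} ⊆ H.verts := by
      rintro x (rfl | rfl | rfl)
      exacts [h₁.fst_mem, h₁.snd_mem, h₂.snd_mem]
    obtain ⟨f, hf⟩ := exists_eq_pathWithTransversal hP hne₁ hne₂ hne₃ hPS hS hcard
    exact ⟨f, hf ▸ hind.induce_top_verts⟩
  · rintro ⟨f, rfl⟩
    have hPS : {u₁, v₁, v₂} ⊆ pathWithTransversal u₁ v₁ v₂ f := Set.subset_union_left
    refine ⟨(Subgraph.nonempty_coe_iso_cliqueMinusEdge_iff (hPS (by simp)) (hPS (by simp)) hne₃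
      hnadj).2 ⟨ncard_pathWithTransversal hP hne₁ hne₂ hne₃ f, fun x hx y hy h => ⟨hx, hy, h⟩,
        isCliqueExcept_pathWithTransversal hP hne₁ hne₂ f⟩,
      ⟨hPS (by simp), hPS (by simp), adj_iff.2 (Or.inr ⟨Or.inl rfl, hne₁⟩)⟩,
      ⟨hPS (by simp), hPS (by simp), adj_iff.2 (Or.inr ⟨Or.inr rfl, hne₂⟩)⟩⟩

theorem ncard_copies_eq [Finite ι]
    (hP : ∀ x ∈ ({u₁, v₁, v₂} : Set (Σ i, α i)), x.1 = i0)
    (hne₁ : u₁ ≠ v₁) (hne₂ : v₁ ≠ v₂) (hne₃ : u₁ ≠ v₂) :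
    {H : (completeMultipartiteWithPath α u₁ v₁ v₂).Subgraph |
        Nonempty (H.coe ≃g cliqueMinusEdge (Nat.card ι)) ∧
          s(u₁, v₁) ∈ H.edgeSet ∧ s(v₁, v₂) ∈ H.edgeSet}.ncard =
      Nat.card (∀ i : {i // i ≠ i0}, α i) := by
  rw [copies_eq_range_induce_pathWithTransversal hP hne₁ hne₂ hne₃, Set.ncard_range_of_injective]
  exact fun f g h => pathWithTransversal_injective hP (congrArg Subgraph.verts h)

end completeMultipartiteWithPath

theorem copies_through_adjacent_pair_general (r n : ℕ)
    (u₁ v₁ v₂ : Σ _ : Fin r, Fin (n / r)) (i0 : Fin r)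
    (hu₁ : u₁.1 = i0) (hv₁ : v₁.1 = i0) (hv₂ : v₂.1 = i0)
    (hne₁ : u₁ ≠ v₁) (hne₂ : v₁ ≠ v₂) (hne₃ : u₁ ≠ v₂)
    (H : SimpleGraph (Σ _ : Fin r, Fin (n / r)))
    (hH : H = SimpleGraph.completeMultipartiteGraph (fun _ : Fin r => Fin (n / r)) ⊔
      SimpleGraph.fromEdgeSet {s(u₁, v₁), s(v₁, v₂)}) :
    Set.ncard {H' : H.Subgraph | Nonempty (H'.coe ≃g cliqueMinusEdge r) ∧
        s(u₁, v₁) ∈ H'.edgeSet ∧ s(v₁, v₂) ∈ H'.edgeSet} =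
      (n / r) ^ (r - 1) := by
  subst hH
  have hP : ∀ x ∈ ({u₁, v₁, v₂} : Set (Σ _ : Fin r, Fin (n / r))), x.1 = i0 := by
    rintro x (rfl | rfl | rfl) <;> assumption
  have hcount := completeMultipartiteWithPath.ncard_copies_eq hP hne₁ hne₂ hne₃
  rwa [Nat.card_fun, Nat.card_subtype_ne, Nat.card_fin, Nat.card_fin] at hcount

/-- Let `r ∣ n` and let `H` be the complete `r`-partite graph with all parts of size
`n/r`, plus two added edges `u₁v₁`, `v₁v₂` inside one part sharing exactly one endpoint.
Then the number of copies of `K_{r+2}−e` in `H` containing both added edges equals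
`(n/r)^{r−1}`. -/
theorem copies_through_adjacent_pair (r n : ℕ) (hr : 2 ≤ r) (hdvd : r ∣ n)
    (h3 : 3 ≤ n / r)
    (u₁ v₁ v₂ : Σ _ : Fin r, Fin (n / r)) (i0 : Fin r) (hi0 : (i0 : ℕ) = 0)
    (hu₁ : u₁.1 = i0) (hv₁ : v₁.1 = i0) (hv₂ : v₂.1 = i0)
    (hne₁ : u₁ ≠ v₁) (hne₂ : v₁ ≠ v₂) (hne₃ : u₁ ≠ v₂)
    (H : SimpleGraph (Σ _ : Fin r, Fin (n / r)))
    (hH : H = SimpleGraph.completeMultipartiteGraph (fun _ : Fin r => Fin (n / r)) ⊔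
      SimpleGraph.fromEdgeSet {s(u₁, v₁), s(v₁, v₂)}) :
    Set.ncard {H' : H.Subgraph | Nonempty (H'.coe ≃g cliqueMinusEdge r) ∧
        s(u₁, v₁) ∈ H'.edgeSet ∧ s(v₁, v₂) ∈ H'.edgeSet} =
      (n / r) ^ (r - 1) :=
  copies_through_adjacent_pair_general r n u₁ v₁ v₂ i0 hu₁ hv₁ hv₂ hne₁ hne₂ hne₃ H hH
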